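/- Approximation fixed-point bound: let T be a γ-contraction (0 ≤ γ < 1) on a metric space with fixed point Q*, let Π be nonexpansive, and let Q̃ be a fixed point of Π ∘ T. If d(Π Q*, Q*) ≤ ε, then d(Q̃, Q*) ≤ ε / (1 − γ). -/
import Mathlib

/-- approximation fixed-point bound. -/
theorem approx_fixed_point_bound
    {X : Type*} [MetricSpace X]
    (γ : ℝ) (hγ0 : 0 ≤ γ) (hγ1 : γ < 1)
    (T Proj : X → X)
    (hT : ∀ x y, dist (T x) (T y) ≤ γ * dist x y)
    (hProj : ∀ x y, dist (Proj x) (Proj y) ≤ dist x y)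
    (Qstar Qtilde : X)
    (hfix : T Qstar = Qstar) (hfixt : (Proj ∘ T) Qtilde = Qtilde)
    (ε : ℝ) (hε : 0 ≤ ε) (hproj : dist (Proj Qstar) Qstar ≤ ε) :
    dist Qtilde Qstar ≤ ε / (1 - γ) := by
  have key : dist Qtilde Qstar ≤ γ * dist Qtilde Qstar + ε := by
    calc dist Qtilde Qstar = dist (Proj (T Qtilde)) Qstar := by
          rw [show Proj (T Qtilde) = Qtilde from hfixt]
      _ ≤ dist (Proj (T Qtilde)) (Proj Qstar) + dist (Proj Qstar) Qstar :=
          dist_triangle _ _ _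
      _ ≤ dist (T Qtilde) Qstar + ε := by
          have := hProj (T Qtilde) Qstar
          linarith
      _ = dist (T Qtilde) (T Qstar) + ε := by rw [hfix]
      _ ≤ γ * dist Qtilde Qstar + ε := by linarith [hT Qtilde Qstar]
  rw [le_div_iff₀ (by linarith)]
  nlinarith
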